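/- arXiv:2303.02714 — 5 statements merged into one kernel-verified Lean document; each statement's English description precedes it below -/
import Mathlib

section
/- For all valid labelings X and Y, the transition matrix M of the distributed Metropolis chain satisfies the detailed balance equation π(X)·M[X,Y] = π(Y)·M[Y,X]. -/
open scoped Classical
open Finset

noncomputable section

namespace DistSampling

variable {V L : Type*} [Fintype V] [Fintype L] [DecidableEq V] [DecidableEq L]
  [Nonempty V] [Nonempty L]

/-- `Sw b v` is the normalizing constant `S_v = Σ_{l ∈ L} b_v(l)`. -/
def Sw (b : V → L → ℝ) (v : V) : ℝ := ∑ l, b v l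

/-- `Cstar C R` is the maximum value `C*_R` of the constraint `C_R` over all labelings. -/
def Cstar (C : Finset V → (V → L) → ℝ) (R : Finset V) : ℝ :=
  Finset.univ.sup' Finset.univ_nonempty (fun X : V → L => C R X)

/-- The weight `w(X)` of a labeling `X`. -/
def weight (b : V → L → ℝ) (𝒮 : Finset (Finset V)) (C : Finset V → (V → L) → ℝ)
    (X : V → L) : ℝ :=
  (∏ v, b v (X v)) * ∏ R ∈ 𝒮, C R X

/-- A vertex is restricted under the filter outcome `I` if it belongs to a
constraint set that fails its filter. -/
def Restricted (𝒮 : Finset (Finset V)) (I : {R // R ∈ 𝒮} → Bool) (v : V) : Prop :=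
  ∃ R : {R // R ∈ 𝒮}, v ∈ R.val ∧ I R = false

/-- The move `(σ, I)` maps the labeling `X` to the labeling `Y`:
active unrestricted vertices adopt their proposal, everyone else keeps their label. -/
def MoveMapsTo (𝒮 : Finset (Finset V)) (σ : V → Option L) (I : {R // R ∈ 𝒮} → Bool)
    (X Y : V → L) : Prop :=
  ∀ v, Y v = if Restricted 𝒮 I v then X v else (σ v).getD (X v)

/-- A choice vector for constraint set `R`: each vertex of `R` chooses 'cur'
(`false`) or, if active, 'prop' (`true`), with at least one 'prop'; vertices
outside `R` make no choice. -/
def IsChoice (σ : V → Option L) (R : Finset V) (c : V → Bool) : Prop :=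
  (∀ v, c v = true → v ∈ R ∧ (σ v).isSome) ∧ (∃ v ∈ R, c v = true)

/-- The potential labeling `ℓ_c` determined by a choice vector `c`. -/
def potential (σ : V → Option L) (X : V → L) (c : V → Bool) : V → L :=
  fun v => if c v then (σ v).getD (X v) else X v

/-- `q_R(σ, X)`: the probability that constraint set `R` passes the local filter. -/
def q (C : Finset V → (V → L) → ℝ) (σ : V → Option L) (X : V → L) (R : Finset V) : ℝ :=
  ∏ c ∈ Finset.univ.filter (fun c : V → Bool => IsChoice σ R c),
    C R (potential σ X c) / Cstar C R

/-- `P(σ)`: the probability of the marking/proposal outcome `σ`. -/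
def Pprop (b : V → L → ℝ) (p : ℝ) (σ : V → Option L) : ℝ :=
  ∏ v, (σ v).elim (1 - p) (fun l => p * b v l / Sw b v)

/-- `P(I | σ, X)`: the probability of the filter outcome `I` given proposal `σ`
and current labeling `X`. -/
def Pfilter (C : Finset V → (V → L) → ℝ) (𝒮 : Finset (Finset V))
    (σ : V → Option L) (X : V → L) (I : {R // R ∈ 𝒮} → Bool) : ℝ :=
  ∏ R : {R // R ∈ 𝒮}, (if I R then q C σ X R.val else 1 - q C σ X R.val)

/-- The transition matrix `M` of the distributed Metropolis chain. -/
def M (b : V → L → ℝ) (p : ℝ) (𝒮 : Finset (Finset V))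
    (C : Finset V → (V → L) → ℝ) : Matrix (V → L) (V → L) ℝ :=
  fun X Y => ∑ σ : V → Option L, ∑ I : {R // R ∈ 𝒮} → Bool,
    if MoveMapsTo 𝒮 σ I X Y then Pprop b p σ * Pfilter C 𝒮 σ X I else 0

/-- `π(X)`: the probability of labeling `X`, proportional to its weight. -/
def pie (b : V → L → ℝ) (𝒮 : Finset (Finset V)) (C : Finset V → (V → L) → ℝ)
    (X : V → L) : ℝ :=
  weight b 𝒮 C X / ∑ Z : V → L, weight b 𝒮 C Z

/-- The modified proposal `σ'` associated with a move taking `X` to `Y`. -/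
def sigma' (X Y : V → L) (σ : V → Option L) : V → Option L :=
  fun v => if X v ≠ Y v then some (X v) else σ v

end DistSampling

/-!
Write `σ'` for `sigma' X Y σ`, the proposal that offers the old label `X v` at every vertex that
changes. If the move `(σ, I)` takes `X` to `Y`, then `(σ', I)` takes `Y` back to `X`, and `σ ↦ σ'`
is an involution between the two sets of moves, so it suffices to prove
`w(X) P(σ) P(I | σ, X) = w(Y) P(σ') P(I | σ', Y)` move by move. In the vertex factors `σ'` just
swaps `b_v(X v)` and `b_v(Y v)`. A constraint `R` that fails its filter freezes its vertices, so
`X, σ` and `Y, σ'` agree on `R` and `q_R` is the same on both sides. For a constraint that passes,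
adjoin the all-'cur' vector to the choice vectors: `C_R(X) q_R(σ, X)` becomes `C*_R` times a product
over all sets of active vertices of `R`, and toggling the changed vertices of `R` is an involution
on these sets that turns the potential labelings of `(σ, X)` into those of `(σ', Y)`.
-/

namespace DistSampling

section Move

variable {V L : Type*} {𝒮 : Finset (Finset V)} {σ : V → Option L} {I : {R // R ∈ 𝒮} → Bool}
  {X Y : V → L}

theorem MoveMapsTo.eq_of_restricted (h : MoveMapsTo 𝒮 σ I X Y) {v : V}
    (hv : Restricted 𝒮 I v) : X v = Y v := by
  simpa [hv] using (h v).symm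

theorem MoveMapsTo.proposal_eq_of_ne (h : MoveMapsTo 𝒮 σ I X Y) {v : V} (hv : X v ≠ Y v) :
    σ v = some (Y v) := by
  have hYv := h v
  rw [if_neg (mt h.eq_of_restricted hv)] at hYv
  cases hσ : σ v with
  | none => rw [hσ, Option.getD_none] at hYv; exact absurd hYv.symm hv
  | some l => rw [hσ, Option.getD_some] at hYv; rw [hYv]

variable [DecidableEq L]

theorem sigma'_of_eq {v : V} (hv : X v = Y v) : sigma' X Y σ v = σ v := by
  simp [sigma', hv]

theorem sigma'_of_ne {v : V} (hv : X v ≠ Y v) : sigma' X Y σ v = some (X v) := by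
  simp [sigma', hv]

theorem MoveMapsTo.isSome_sigma' (h : MoveMapsTo 𝒮 σ I X Y) (v : V) :
    (sigma' X Y σ v).isSome = (σ v).isSome := by
  by_cases hv : X v = Y v
  · rw [sigma'_of_eq hv]
  · rw [sigma'_of_ne hv, h.proposal_eq_of_ne hv]; rfl

theorem MoveMapsTo.sigma'_sigma' (h : MoveMapsTo 𝒮 σ I X Y) :
    sigma' Y X (sigma' X Y σ) = σ := by
  funext v
  by_cases hv : X v = Y v
  · rw [sigma'_of_eq hv.symm, sigma'_of_eq hv]
  · rw [sigma'_of_ne (Ne.symm hv), h.proposal_eq_of_ne hv]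

theorem MoveMapsTo.reverse (h : MoveMapsTo 𝒮 σ I X Y) : MoveMapsTo 𝒮 (sigma' X Y σ) I Y X := by
  intro v
  by_cases hv : X v = Y v
  · have hYv := h v
    rw [← hv] at hYv ⊢
    rwa [sigma'_of_eq hv]
  · rw [if_neg (mt h.eq_of_restricted hv), sigma'_of_ne hv, Option.getD_some]

end Move

section Choice

variable {V L : Type*} {σ τ : V → Option L} {R : Finset V}

theorem potential_false (σ : V → Option L) (X : V → L) : potential σ X (fun _ => false) = X :=
  rfl

theorem not_isChoice_false (σ : V → Option L) (R : Finset V) : ¬ IsChoice σ R fun _ => false := by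
  simp [IsChoice]

theorem isChoice_congr (hστ : ∀ v ∈ R, (σ v).isSome = (τ v).isSome) (c : V → Bool) :
    IsChoice σ R c ↔ IsChoice τ R c :=
  and_congr (forall_congr' fun v => imp_congr_right fun _ =>
    and_congr_right fun hv => by rw [hστ v hv]) Iff.rfl

variable [Fintype V] [DecidableEq V]

def weakChoices (σ : V → Option L) (R : Finset V) : Finset (V → Bool) :=
  univ.filter fun c => ∀ v, c v = true → v ∈ R ∧ (σ v).isSome

theorem weakChoices_eq_insert (σ : V → Option L) (R : Finset V) :
    weakChoices σ R = insert (fun _ => false) (univ.filter fun c => IsChoice σ R c) := by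
  ext c
  rw [weakChoices, mem_insert, mem_filter, mem_filter]
  simp only [IsChoice, mem_univ, true_and]
  constructor
  · intro hc
    by_cases hex : ∃ v ∈ R, c v = true
    · exact Or.inr ⟨hc, hex⟩
    · refine Or.inl (funext fun v => ?_)
      by_contra hv
      rw [Bool.not_eq_false] at hv
      exact hex ⟨v, (hc v hv).1, hv⟩
  · rintro (rfl | ⟨hc, -⟩)
    · simp
    · exact hc

theorem weakChoices_congr (hστ : ∀ v ∈ R, (σ v).isSome = (τ v).isSome) :
    weakChoices σ R = weakChoices τ R := by
  simp only [weakChoices_eq_insert, filter_congr fun c _ => isChoice_congr hστ c]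

variable [Fintype L] [Nonempty L] {C : Finset V → (V → L) → ℝ} {X Y : V → L}

theorem prod_weakChoices :
    ∏ c ∈ weakChoices σ R, C R (potential σ X c) / Cstar C R = C R X / Cstar C R * q C σ X R := by
  rw [weakChoices_eq_insert, prod_insert (by simpa using not_isChoice_false σ R),
    potential_false]
  rfl

theorem q_congr (hC : ∀ Z W : V → L, (∀ v ∈ R, Z v = W v) → C R Z = C R W)
    (hXY : ∀ v ∈ R, X v = Y v) (hστ : ∀ v ∈ R, σ v = τ v) : q C σ X R = q C τ Y R := by
  unfold q
  rw [filter_congr fun c _ => isChoice_congr (fun v hv => by rw [hστ v hv]) c]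
  refine prod_congr rfl fun c _ => ?_
  congr 1
  exact hC _ _ fun v hv => by simp only [potential, hστ v hv, hXY v hv]

end Choice

section Balance

variable {V L : Type*} [Fintype V] [Fintype L] [DecidableEq L] {𝒮 : Finset (Finset V)}
  {σ : V → Option L} {I : {R // R ∈ 𝒮} → Bool} {X Y : V → L}

theorem MoveMapsTo.prod_mul_Pprop (h : MoveMapsTo 𝒮 σ I X Y) (b : V → L → ℝ) (p : ℝ) :
    (∏ v, b v (X v)) * Pprop b p σ = (∏ v, b v (Y v)) * Pprop b p (sigma' X Y σ) := by
  simp only [Pprop, ← prod_mul_distrib]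
  refine prod_congr rfl fun v _ => ?_
  by_cases hv : X v = Y v
  · rw [sigma'_of_eq hv, hv]
  · rw [sigma'_of_ne hv, h.proposal_eq_of_ne hv, Option.elim_some, Option.elim_some]
    ring

variable [DecidableEq V] [Nonempty L] {C : Finset V → (V → L) → ℝ}

theorem MoveMapsTo.mul_q_eq (h : MoveMapsTo 𝒮 σ I X Y) {R : Finset V}
    (hC : ∀ Z W : V → L, (∀ v ∈ R, Z v = W v) → C R Z = C R W) (hCstar : Cstar C R ≠ 0) :
    C R X * q C σ X R = C R Y * q C (sigma' X Y σ) Y R := by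
  let toggle : (V → Bool) → V → Bool := fun c v => xor (c v) (decide (v ∈ R ∧ X v ≠ Y v))
  have toggle_toggle (c : V → Bool) : toggle (toggle c) = c := by
    funext v
    simp only [toggle, Bool.xor_assoc, Bool.xor_self, Bool.xor_false]
  have toggle_mem (c) (hc : c ∈ weakChoices σ R) : toggle c ∈ weakChoices σ R := by
    simp only [weakChoices, mem_filter, mem_univ, true_and] at hc ⊢
    intro v hv
    by_cases hvR : v ∈ R ∧ X v ≠ Y v
    · exact ⟨hvR.1, by rw [h.proposal_eq_of_ne hvR.2]; rfl⟩
    · have htoggle : toggle c v = c v := by simp only [toggle, hvR, decide_false, Bool.xor_false]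
      exact hc v (htoggle ▸ hv)
  have potential_toggle (c) (v) (hv : v ∈ R) :
      potential σ X c v = potential (sigma' X Y σ) Y (toggle c) v := by
    simp only [potential, toggle]
    by_cases hXY : X v = Y v
    · rw [sigma'_of_eq hXY]
      simp [hXY]
    · rw [sigma'_of_ne hXY, h.proposal_eq_of_ne hXY]
      by_cases hc : c v = true <;> simp [hc, hv, hXY]
  have hprod : ∏ c ∈ weakChoices σ R, C R (potential σ X c) / Cstar C R
      = ∏ c ∈ weakChoices (sigma' X Y σ) R, C R (potential (sigma' X Y σ) Y c) / Cstar C R := by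
    rw [weakChoices_congr fun v _ => h.isSome_sigma' v]
    exact prod_nbij' toggle toggle toggle_mem toggle_mem (fun c _ => toggle_toggle c)
      (fun c _ => toggle_toggle c) fun c _ => by rw [hC _ _ (potential_toggle c)]
  rwa [prod_weakChoices, prod_weakChoices, div_mul_eq_mul_div, div_mul_eq_mul_div,
    div_left_inj' hCstar] at hprod

theorem MoveMapsTo.prod_mul_Pfilter (h : MoveMapsTo 𝒮 σ I X Y)
    (hC : ∀ R ∈ 𝒮, ∀ Z W : V → L, (∀ v ∈ R, Z v = W v) → C R Z = C R W)
    (hCstar : ∀ R ∈ 𝒮, 0 < Cstar C R) :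
    (∏ R ∈ 𝒮, C R X) * Pfilter C 𝒮 σ X I
      = (∏ R ∈ 𝒮, C R Y) * Pfilter C 𝒮 (sigma' X Y σ) Y I := by
  rw [Pfilter, Pfilter, ← prod_coe_sort 𝒮, ← prod_coe_sort 𝒮, ← prod_mul_distrib,
    ← prod_mul_distrib]
  refine prod_congr rfl fun ⟨R, hR⟩ _ => ?_
  cases hI : I ⟨R, hR⟩
  · have hXY : ∀ v ∈ R, X v = Y v := fun v hv => h.eq_of_restricted ⟨⟨R, hR⟩, hv, hI⟩
    simp only [Bool.false_eq_true, if_false]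
    rw [hC R hR X Y hXY, q_congr (hC R hR) hXY fun v hv => (sigma'_of_eq (hXY v hv)).symm]
  · simp only [if_true]
    exact h.mul_q_eq (hC R hR) (hCstar R hR).ne'

theorem MoveMapsTo.weight_mul_Pprop_mul_Pfilter (h : MoveMapsTo 𝒮 σ I X Y) (b : V → L → ℝ)
    (p : ℝ) (hC : ∀ R ∈ 𝒮, ∀ Z W : V → L, (∀ v ∈ R, Z v = W v) → C R Z = C R W)
    (hCstar : ∀ R ∈ 𝒮, 0 < Cstar C R) :
    weight b 𝒮 C X * (Pprop b p σ * Pfilter C 𝒮 σ X I)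
      = weight b 𝒮 C Y * (Pprop b p (sigma' X Y σ) * Pfilter C 𝒮 (sigma' X Y σ) Y I) := by
  calc weight b 𝒮 C X * (Pprop b p σ * Pfilter C 𝒮 σ X I)
      = ((∏ v, b v (X v)) * Pprop b p σ) * ((∏ R ∈ 𝒮, C R X) * Pfilter C 𝒮 σ X I) := by
        rw [weight]; ring
    _ = ((∏ v, b v (Y v)) * Pprop b p (sigma' X Y σ))
          * ((∏ R ∈ 𝒮, C R Y) * Pfilter C 𝒮 (sigma' X Y σ) Y I) := by
        rw [h.prod_mul_Pprop, h.prod_mul_Pfilter hC hCstar]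
    _ = weight b 𝒮 C Y * (Pprop b p (sigma' X Y σ) * Pfilter C 𝒮 (sigma' X Y σ) Y I) := by
        rw [weight]; ring

end Balance

section Chain

variable {V L : Type*} [Fintype V] [Fintype L] [DecidableEq V]

def moves (𝒮 : Finset (Finset V)) (X Y : V → L) :
    Finset ((V → Option L) × ({R // R ∈ 𝒮} → Bool)) :=
  univ.filter fun m => MoveMapsTo 𝒮 m.1 m.2 X Y

variable {𝒮 : Finset (Finset V)}

theorem mem_moves {X Y : V → L} {m : (V → Option L) × ({R // R ∈ 𝒮} → Bool)} :
    m ∈ moves 𝒮 X Y ↔ MoveMapsTo 𝒮 m.1 m.2 X Y := by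
  simp [moves]

variable [Nonempty L] {C : Finset V → (V → L) → ℝ}

theorem M_eq_sum_moves (b : V → L → ℝ) (p : ℝ) (X Y : V → L) :
    M b p 𝒮 C X Y = ∑ m ∈ moves 𝒮 X Y, Pprop b p m.1 * Pfilter C 𝒮 m.1 X m.2 := by
  rw [moves, sum_filter, Fintype.sum_prod_type]
  rfl

variable [DecidableEq L]

theorem weight_mul_M (b : V → L → ℝ) (p : ℝ)
    (hC : ∀ R ∈ 𝒮, ∀ Z W : V → L, (∀ v ∈ R, Z v = W v) → C R Z = C R W)
    (hCstar : ∀ R ∈ 𝒮, 0 < Cstar C R) (X Y : V → L) :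
    weight b 𝒮 C X * M b p 𝒮 C X Y = weight b 𝒮 C Y * M b p 𝒮 C Y X := by
  rw [M_eq_sum_moves, M_eq_sum_moves, mul_sum, mul_sum]
  refine sum_nbij' (fun m => (sigma' X Y m.1, m.2)) (fun m => (sigma' Y X m.1, m.2))
    (fun m hm => mem_moves.2 (mem_moves.1 hm).reverse)
    (fun m hm => mem_moves.2 (mem_moves.1 hm).reverse)
    (fun m hm => Prod.ext (mem_moves.1 hm).sigma'_sigma' rfl)
    (fun m hm => Prod.ext (mem_moves.1 hm).sigma'_sigma' rfl)
    fun m hm => (mem_moves.1 hm).weight_mul_Pprop_mul_Pfilter b p hC hCstar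

end Chain

variable {V L : Type*} [Fintype V] [Fintype L] [DecidableEq V] [DecidableEq L]
  [Nonempty V] [Nonempty L]

theorem detailed_balance_general
(b : V → L → ℝ) (p : ℝ) (𝒮 : Finset (Finset V)) (C : Finset V → (V → L) → ℝ)
    (hCloc : ∀ R ∈ 𝒮, ∀ X Y : V → L, (∀ v ∈ R, X v = Y v) → C R X = C R Y)
    (hCstar : ∀ R ∈ 𝒮, 0 < Cstar C R)
    (X Y : V → L) :
    pie b 𝒮 C X * M b p 𝒮 C X Y = pie b 𝒮 C Y * M b p 𝒮 C Y X := by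
  rw [pie, pie, div_mul_eq_mul_div, div_mul_eq_mul_div, weight_mul_M b p hCloc hCstar]

/-- detailed balance for the distributed Metropolis chain. -/
theorem detailed_balance
(b : V → L → ℝ) (p : ℝ) (𝒮 : Finset (Finset V)) (C : Finset V → (V → L) → ℝ)
    (hb : ∀ v l, 0 ≤ b v l) (hS : ∀ v, 0 < Sw b v)
    (hcard : ∀ R ∈ 𝒮, 2 ≤ R.card)
    (hC0 : ∀ R ∈ 𝒮, ∀ X : V → L, 0 ≤ C R X)
    (hCloc : ∀ R ∈ 𝒮, ∀ X Y : V → L, (∀ v ∈ R, X v = Y v) → C R X = C R Y)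
    (hCstar : ∀ R ∈ 𝒮, 0 < Cstar C R)
    (hp : 0 < p) (hp1 : p < 1)
    (hvalid : ∃ Z : V → L, 0 < weight b 𝒮 C Z)
    (X Y : V → L) (hX : 0 < weight b 𝒮 C X) (hY : 0 < weight b 𝒮 C Y) :
    pie b 𝒮 C X * M b p 𝒮 C X Y = pie b 𝒮 C Y * M b p 𝒮 C Y X :=
  detailed_balance_general b p 𝒮 C hCloc hCstar X Y

end DistSampling
end
end

section
/- If X and Y are valid labelings that differ at exactly one vertex, then M[X,Y] > 0, where M is the transition matrix of the distributed Metropolis chain. -/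
/-!
Take the move in which the vertex `v` where `X` and `Y` differ is the only active one, proposing
`Y v`, and every filter passes. It maps `X` to `Y`. Its proposal has probability
`(1 - p)^(|V| - 1) · p · b_v(Y v) / S_v > 0`, and since `v` is the only active vertex every choice
vector yields the potential labeling `Y`, so each `q_R` is a product of copies of
`C_R(Y) / C*_R > 0`. All other terms of the sum defining `M[X, Y]` are nonnegative.
-/

open scoped Classical
open Finset

noncomputable section

namespace DistSampling

variable {V L : Type*} [Fintype V] [Fintype L] [DecidableEq V] [DecidableEq L]
  [Nonempty V] [Nonempty L]

set_option linter.unusedSectionVars false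

section

variable {b : V → L → ℝ} {p : ℝ} {𝒮 : Finset (Finset V)} {C : Finset V → (V → L) → ℝ}

lemma weight_ne_zero_iff {X : V → L} :
    weight b 𝒮 C X ≠ 0 ↔ (∀ v, b v (X v) ≠ 0) ∧ ∀ R ∈ 𝒮, C R X ≠ 0 := by
  simp [weight, prod_ne_zero_iff]

lemma le_Cstar (C : Finset V → (V → L) → ℝ) (R : Finset V) (X : V → L) :
    C R X ≤ Cstar C R :=
  le_sup' (fun X => C R X) (mem_univ X)

lemma Pprop_nonneg (hb : ∀ v l, 0 ≤ b v l) (hS : ∀ v, 0 ≤ Sw b v) (hp : 0 ≤ p) (hp1 : p ≤ 1)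
    (σ : V → Option L) : 0 ≤ Pprop b p σ :=
  prod_nonneg fun v _ => by
    cases σ v with
    | none => exact sub_nonneg.2 hp1
    | some l => exact div_nonneg (mul_nonneg hp (hb v l)) (hS v)

lemma q_mem_Icc {R : Finset V} (hC0 : ∀ X, 0 ≤ C R X) (hCstar : 0 < Cstar C R)
    (σ : V → Option L) (X : V → L) : q C σ X R ∈ Set.Icc 0 1 :=
  ⟨prod_nonneg fun _ _ => div_nonneg (hC0 _) hCstar.le,
    prod_le_one (fun _ _ => div_nonneg (hC0 _) hCstar.le)
      fun _ _ => (div_le_one hCstar).2 (le_Cstar C R _)⟩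

lemma Pfilter_nonneg (hC0 : ∀ R ∈ 𝒮, ∀ X, 0 ≤ C R X) (hCstar : ∀ R ∈ 𝒮, 0 < Cstar C R)
    (σ : V → Option L) (X : V → L) (I : {R // R ∈ 𝒮} → Bool) : 0 ≤ Pfilter C 𝒮 σ X I :=
  prod_nonneg fun R _ => by
    have hq := q_mem_Icc (hC0 R R.2) (hCstar R R.2) σ X
    split
    · exact hq.1
    · exact sub_nonneg.2 hq.2

lemma Pfilter_allPass (σ : V → Option L) (X : V → L) :
    Pfilter C 𝒮 σ X (fun _ => true) = ∏ R : {R // R ∈ 𝒮}, q C σ X R :=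
  rfl

lemma le_M_of_moveMapsTo {σ : V → Option L} {I : {R // R ∈ 𝒮} → Bool} {X Y : V → L}
    (hnonneg : ∀ σ I, 0 ≤ Pprop b p σ * Pfilter C 𝒮 σ X I) (hmove : MoveMapsTo 𝒮 σ I X Y) :
    Pprop b p σ * Pfilter C 𝒮 σ X I ≤ M b p 𝒮 C X Y := by
  have hterm : ∀ σ I, 0 ≤ if MoveMapsTo 𝒮 σ I X Y then Pprop b p σ * Pfilter C 𝒮 σ X I else 0 :=
    fun σ I => by split <;> simp [hnonneg]
  calc Pprop b p σ * Pfilter C 𝒮 σ X I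
      = if MoveMapsTo 𝒮 σ I X Y then Pprop b p σ * Pfilter C 𝒮 σ X I else 0 := (if_pos hmove).symm
    _ ≤ ∑ I, if MoveMapsTo 𝒮 σ I X Y then Pprop b p σ * Pfilter C 𝒮 σ X I else 0 :=
      single_le_sum (fun I _ => hterm σ I) (mem_univ I)
    _ ≤ M b p 𝒮 C X Y :=
      single_le_sum (f := fun σ => ∑ I, _) (fun σ _ => sum_nonneg fun I _ => hterm σ I)
        (mem_univ σ)

def singleProposal (v : V) (l : L) : V → Option L :=
  Function.update (fun _ => none) v (some l)

lemma Pprop_singleProposal (v : V) (l : L) :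
    Pprop b p (singleProposal v l) = (1 - p) ^ (Fintype.card V - 1) * (p * b v l / Sw b v) := by
  rw [Pprop, Fintype.prod_eq_mul_prod_compl v, mul_comm]
  congr 1
  · rw [prod_congr rfl fun u hu => show _ = 1 - p by
        simp [singleProposal, Function.update_of_ne (by simpa using hu : u ≠ v)],
      prod_const, card_compl, card_singleton]
  · simp [singleProposal]

lemma moveMapsTo_singleProposal (v : V) (l : L) (X : V → L) :
    MoveMapsTo 𝒮 (singleProposal v l) (fun _ => true) X (Function.update X v l) := by
  intro u
  rw [if_neg (by simp [Restricted])]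
  by_cases hu : u = v
  · subst hu; simp [singleProposal]
  · simp [singleProposal, hu]

-- `v` is the only active vertex, so a choice vector proposes at `v` and nowhere else.
lemma potential_singleProposal {v : V} {l : L} {R : Finset V} {c : V → Bool}
    (hc : IsChoice (singleProposal v l) R c) (X : V → L) :
    potential (singleProposal v l) X c = Function.update X v l := by
  obtain ⟨hactive, u, -, hcu⟩ := hc
  have hc_eq : ∀ w, c w = true → w = v := fun w hw => by
    by_contra hwv
    simpa [singleProposal, hwv] using (hactive w hw).2
  funext w
  by_cases hw : w = v
  · subst hw
    obtain rfl := hc_eq u hcu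
    simp [potential, singleProposal, hcu]
  · have : c w = false := by simpa using mt (hc_eq w) hw
    simp [potential, this, hw]

lemma q_singleProposal_pos {v : V} {l : L} {R : Finset V} {X : V → L}
    (hCstar : 0 < Cstar C R) (hC : 0 < C R (Function.update X v l)) :
    0 < q C (singleProposal v l) X R :=
  prod_pos fun c hc => by
    rw [potential_singleProposal (mem_filter.1 hc).2]
    exact div_pos hC hCstar

lemma M_update_pos (hb : ∀ v l, 0 ≤ b v l) (hS : ∀ v, 0 < Sw b v)
    (hC0 : ∀ R ∈ 𝒮, ∀ X, 0 ≤ C R X) (hCstar : ∀ R ∈ 𝒮, 0 < Cstar C R)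
    (hp : 0 < p) (hp1 : p < 1) {X : V → L} {v : V} {l : L} (hbl : 0 < b v l)
    (hC : ∀ R ∈ 𝒮, 0 < C R (Function.update X v l)) :
    0 < M b p 𝒮 C X (Function.update X v l) := by
  refine lt_of_lt_of_le ?_ (le_M_of_moveMapsTo
    (fun σ I => mul_nonneg (Pprop_nonneg hb (fun v => (hS v).le) hp.le hp1.le σ)
      (Pfilter_nonneg hC0 hCstar σ X I))
    (moveMapsTo_singleProposal v l X))
  rw [Pprop_singleProposal, Pfilter_allPass]
  have hq : 0 < ∏ R : {R // R ∈ 𝒮}, q C (singleProposal v l) X R :=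
    prod_pos fun R _ => q_singleProposal_pos (hCstar R R.2) (hC R R.2)
  have hSv := hS v
  have hp1' : 0 < 1 - p := sub_pos.2 hp1
  positivity

end

theorem single_vertex_transition_general
(b : V → L → ℝ) (p : ℝ) (𝒮 : Finset (Finset V)) (C : Finset V → (V → L) → ℝ)
    (hb : ∀ v l, 0 ≤ b v l) (hS : ∀ v, 0 < Sw b v)
    (hC0 : ∀ R ∈ 𝒮, ∀ X : V → L, 0 ≤ C R X)
    (hCstar : ∀ R ∈ 𝒮, 0 < Cstar C R)
    (hp : 0 < p) (hp1 : p < 1)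
    (X Y : V → L) (hY : 0 < weight b 𝒮 C Y)
    (hdiff : ∃ v, X v ≠ Y v ∧ ∀ u, u ≠ v → X u = Y u) :
    0 < M b p 𝒮 C X Y := by
  obtain ⟨v, -, hXY⟩ := hdiff
  have hY_eq : Y = Function.update X v (Y v) :=
    Function.eq_update_iff.2 ⟨rfl, fun u hu => (hXY u hu).symm⟩
  obtain ⟨hbY, hCY⟩ := weight_ne_zero_iff.1 hY.ne'
  rw [hY_eq] at hCY ⊢
  exact M_update_pos hb hS hC0 hCstar hp hp1 ((hb v _).lt_of_ne' (hbY v))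
    fun R hR => (hC0 R hR _).lt_of_ne' (hCY R hR)

/-- if valid labelings X and Y differ at exactly one vertex,
then M[X,Y] > 0. -/
theorem single_vertex_transition
(b : V → L → ℝ) (p : ℝ) (𝒮 : Finset (Finset V)) (C : Finset V → (V → L) → ℝ)
    (hb : ∀ v l, 0 ≤ b v l) (hS : ∀ v, 0 < Sw b v)
    (hcard : ∀ R ∈ 𝒮, 2 ≤ R.card)
    (hC0 : ∀ R ∈ 𝒮, ∀ X : V → L, 0 ≤ C R X)
    (hCloc : ∀ R ∈ 𝒮, ∀ X Y : V → L, (∀ v ∈ R, X v = Y v) → C R X = C R Y)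
    (hCstar : ∀ R ∈ 𝒮, 0 < Cstar C R)
    (hp : 0 < p) (hp1 : p < 1)
    (hvalid : ∃ Z : V → L, 0 < weight b 𝒮 C Z)
    (X Y : V → L) (hX : 0 < weight b 𝒮 C X) (hY : 0 < weight b 𝒮 C Y)
    (hdiff : ∃ v, X v ≠ Y v ∧ ∀ u, u ≠ v → X u = Y u) :
    0 < M b p 𝒮 C X Y :=
  single_vertex_transition_general b p 𝒮 C hb hS hC0 hCstar hp hp1 X Y hY hdiff

end DistSampling
end
end

section
/- (Correctness of coupling from the past.) Let Ω be a finite nonempty set, let M : Ω × Ω → ℝ be a stochastic matrix (M[x,y] ≥ 0 and Σ_y M[x,y] = 1 for every x), and let π be a probability distribution on Ω that is stationary for M, i.e., Σ_x π(x)·M[x,y] = π(y) for all y. Let (g_k)_{k≥1} be an i.i.d. sequence of random functions from Ω to Ω such that ℙ(g_1(x) = y) = M[x,y] for all x, y ∈ Ω. Define N := inf{T ≥ 1 : g_1 ∘ g_2 ∘ ⋯ ∘ g_T is a constant function} (with inf ∅ = ∞) and assume ℙ(N < ∞) = 1. Fix any x_0 ∈ Ω and let W := (g_1 ∘ ⋯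 ∘ g_N)(x_0) on the event {N < ∞}. Then ℙ(W = y) = π(y) for every y ∈ Ω. -/
open MeasureTheory ProbabilityTheory

/-- `compBwd G T = g_1 ∘ g_2 ∘ ⋯ ∘ g_T`, where `g_k = G (k - 1)`. -/
def compBwd {Ω : Type*} (G : ℕ → Ω → Ω) : ℕ → Ω → Ω
  | 0 => id
  | T + 1 => compBwd G T ∘ G T

/-- A function is constant if it takes the same value everywhere. -/
def IsConstFn {Ω : Type*} (g : Ω → Ω) : Prop := ∃ c, ∀ x, g x = c

/-- The (backward) coalescence time `N = inf {T ≥ 1 : g_1 ∘ ⋯ ∘ g_T constant}`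
(a natural number; `Nat.sInf ∅ = 0`). -/
noncomputable def coalTime {Ω Θ : Type*} (G : ℕ → Θ → Ω → Ω) (θ : Θ) : ℕ :=
  sInf {T : ℕ | 1 ≤ T ∧ IsConstFn (compBwd (fun k => G k θ) T)}


/-!
Write `F_T = g_1 ∘ ⋯ ∘ g_T`. Since `F_{T+1} = F_T ∘ g_{T+1}` with `g_{T+1}` independent of `F_T`,
the law of `F_T x` is the row `M^T x ·`, so `∑ x, π x * ℙ(F_T x = y) = π y` for every `T`.
Once some `F_S` with `1 ≤ S ≤ T` is constant, `F_T` is constant with the same value as `F_N`;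
hence `ℙ(F_T x = y)` differs from `ℙ(W = y)` by at most `ℙ(N > T)`, which tends to `0`.
Letting `T → ∞` gives `ℙ(W = y) = π y`.
-/

open Filter Topology Matrix

section Composition

variable {Ω : Type*}

lemma compBwd_add (g : ℕ → Ω → Ω) (S n : ℕ) :
    compBwd g (S + n) = compBwd g S ∘ compBwd (fun k => g (S + k)) n := by
  induction n with
  | zero => rfl
  | succ n ih => exact congrArg (· ∘ g (S + n)) ih

lemma compBwd_apply_eq_of_isConstFn {g : ℕ → Ω → Ω} {S T : ℕ}
    (hc : IsConstFn (compBwd g S)) (hST : S ≤ T) (x x' : Ω) :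
    compBwd g T x = compBwd g S x' := by
  obtain ⟨c, hc⟩ := hc
  obtain ⟨n, rfl⟩ := Nat.exists_eq_add_of_le hST
  rw [compBwd_add, Function.comp_apply, hc, hc]

lemma compBwd_congr {g g' : ℕ → Ω → Ω} {T : ℕ} (h : ∀ k < T, g k = g' k) :
    compBwd g T = compBwd g' T := by
  induction T with
  | zero => rfl
  | succ T ih =>
    simp only [compBwd, ih fun k hk => h k (Nat.lt_succ_of_lt hk), h T (Nat.lt_succ_self T)]

lemma compBwd_apply_eq_coalTime {Θ : Type*} (G : ℕ → Θ → Ω → Ω) (θ : Θ) {S T : ℕ}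
    (hS : 1 ≤ S) (hST : S ≤ T) (hc : IsConstFn (compBwd (fun k => G k θ) S)) (x x₀ : Ω) :
    compBwd (fun k => G k θ) T x = compBwd (fun k => G k θ) (coalTime G θ) x₀ := by
  have hS' : S ∈ {T : ℕ | 1 ≤ T ∧ IsConstFn (compBwd (fun k => G k θ) T)} := ⟨hS, hc⟩
  exact compBwd_apply_eq_of_isConstFn (Nat.sInf_mem ⟨S, hS'⟩).2 ((Nat.sInf_le hS').trans hST) x x₀

end Composition

lemma vecMul_pow_eq_self {n R : Type*} [Fintype n] [DecidableEq n] [Semiring R]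
    {π : n → R} {M : Matrix n n R} (h : π ᵥ* M = π) (T : ℕ) : π ᵥ* (M ^ T) = π := by
  induction T with
  | zero => exact vecMul_one π
  | succ T ih => rw [pow_succ, ← vecMul_vecMul, ih, h]

lemma stationary_apply_eq_of_tendsto_pow_apply {n : Type*} [Fintype n] [DecidableEq n]
    {π : n → ℝ} {M : Matrix n n ℝ} (hπ : π ᵥ* M = π) (hsum : ∑ x, π x = 1) {y : n} {p : ℝ}
    (h : ∀ x, Tendsto (fun T => (M ^ T) x y) atTop (𝓝 p)) : p = π y := by
  have hlim : Tendsto (fun T => ∑ x, π x * (M ^ T) x y) atTop (𝓝 (∑ x, π x * p)) :=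
    tendsto_finsetSum _ fun x _ => (h x).const_mul (π x)
  have hconst (T : ℕ) : ∑ x, π x * (M ^ T) x y = π y := congrFun (vecMul_pow_eq_self hπ T) y
  simp only [hconst, ← Finset.sum_mul, hsum, one_mul] at hlim
  exact tendsto_nhds_unique hlim tendsto_const_nhds

lemma abs_measureReal_sub_le_of_inter_eq {α : Type*} [MeasurableSpace α] {μ : Measure α}
    [IsFiniteMeasure μ] {s t D : Set α} (h : s ∩ D = t ∩ D) :
    |μ.real s - μ.real t| ≤ μ.real Dᶜ := by
  have key : ∀ {s t : Set α}, s ∩ D = t ∩ D → μ.real s ≤ μ.real t + μ.real Dᶜ := by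
    intro s t h
    have hsub : s ⊆ t ∪ Dᶜ := fun θ hθ => by
      by_cases hD : θ ∈ D
      · exact Or.inl (h.subset ⟨hθ, hD⟩).1
      · exact Or.inr hD
    exact (measureReal_mono hsub).trans (measureReal_union_le t Dᶜ)
  rw [abs_sub_le_iff]
  constructor <;> linarith [key h, key h.symm]

lemma tendsto_measureReal_compl_atTop {α : Type*} [MeasurableSpace α] {μ : Measure α}
    [IsProbabilityMeasure μ] {D : ℕ → Set α} (hmeas : ∀ n, MeasurableSet (D n))
    (hmono : Monotone D) (h : μ (⋃ n, D n) = 1) :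
    Tendsto (fun n => μ.real (D n)ᶜ) atTop (𝓝 0) := by
  have hD : Tendsto (fun n => μ.real (D n)) atTop (𝓝 1) := by
    have hμ := tendsto_measure_iUnion_atTop (μ := μ) hmono
    rw [h] at hμ
    exact (ENNReal.tendsto_toReal ENNReal.one_ne_top).comp hμ
  simpa [probReal_compl_eq_one_sub (hmeas _)] using hD.const_sub 1

section RandomMaps

variable {Ω Θ : Type*} [MeasurableSpace Θ] [MeasurableSpace (Ω → Ω)]
  [DiscreteMeasurableSpace (Ω → Ω)] {μ : Measure Θ}

lemma measure_comp_apply_eq_sum [Fintype Ω] {f g : Θ → Ω → Ω} (hf : Measurable f)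
    (hg : Measurable g) (hfg : IndepFun f g μ) (x y : Ω) :
    μ {θ | f θ (g θ x) = y} = ∑ z, μ {θ | g θ x = z} * μ {θ | f θ z = y} := by
  have hdecomp : {θ | f θ (g θ x) = y} = ⋃ z ∈ Finset.univ, {θ | g θ x = z} ∩ {θ | f θ z = y} := by
    ext θ
    simp
  have hdisj : (↑(Finset.univ : Finset Ω) : Set Ω).PairwiseDisjoint
      fun z => {θ | g θ x = z} ∩ {θ | f θ z = y} :=
    fun a _ b _ hab => Set.disjoint_left.2 fun θ ha hb => hab (ha.1.symm.trans hb.1)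
  have hmeas (z : Ω) : MeasurableSet ({θ | g θ x = z} ∩ {θ | f θ z = y}) :=
    (hg (.of_discrete (s := {h : Ω → Ω | h x = z}))).inter
      (hf (.of_discrete (s := {h : Ω → Ω | h z = y})))
  rw [hdecomp, measure_biUnion_finset hdisj fun z _ => hmeas z]
  refine Finset.sum_congr rfl fun z _ => ?_
  exact hfg.symm.measure_inter_preimage_eq_mul {h | h x = z} {h | h z = y} .of_discrete .of_discrete

variable {G : ℕ → Θ → Ω → Ω}

lemma measurable_compBwd [Finite Ω] (hG : ∀ k, Measurable (G k)) (T : ℕ) :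
    Measurable fun θ => compBwd (fun k => G k θ) T := by
  induction T with
  | zero => exact measurable_const
  | succ T ih =>
    exact (measurable_of_countable fun p : (Ω → Ω) × (Ω → Ω) => p.1 ∘ p.2).comp (ih.prodMk (hG T))

lemma indepFun_compBwd [Finite Ω] (hG : ∀ k, Measurable (G k)) (hind : iIndepFun G μ) (T : ℕ) :
    IndepFun (fun θ => compBwd (fun k => G k θ) T) (G T) μ := by
  have hpast : IndepFun (fun θ (i : Finset.range T) => G i θ)
      (fun θ (i : ({T} : Finset ℕ)) => G i θ) μ :=
    hind.indepFun_finset _ _ (by simp) hG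
  convert hpast.comp (measurable_of_countable fun t : Finset.range T → Ω → Ω =>
      compBwd (fun k => if h : k ∈ Finset.range T then t ⟨k, h⟩ else id) T)
    (measurable_pi_apply ⟨T, Finset.mem_singleton_self T⟩) using 1
  · funext θ
    exact compBwd_congr fun k hk => by simp [hk]
  · rfl

lemma measureReal_compBwd_apply_eq_pow [Fintype Ω] [DecidableEq Ω] [IsProbabilityMeasure μ]
    (hG : ∀ k, Measurable (G k)) (hind : iIndepFun G μ) {M : Matrix Ω Ω ℝ}
    (hM : ∀ k x y, μ.real {θ | G k θ x = y} = M x y) (T : ℕ) (x y : Ω) :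
    μ.real {θ | compBwd (fun k => G k θ) T x = y} = (M ^ T) x y := by
  induction T generalizing x with
  | zero => by_cases h : x = y <;> simp [compBwd, h]
  | succ T ih =>
    rw [pow_succ', Matrix.mul_apply]
    simp only [← hM T, ← ih]
    change μ.real {θ | compBwd (fun k => G k θ) T (G T θ x) = y} = _
    rw [measureReal_def, measure_comp_apply_eq_sum (measurable_compBwd hG T) (hG T)
      (indepFun_compBwd hG hind T), ENNReal.toReal_sum (by finiteness)]
    simp [ENNReal.toReal_mul, measureReal_def]

lemma tendsto_measureReal_compBwd_apply [Finite Ω] [IsProbabilityMeasure μ]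
    (hG : ∀ k, Measurable (G k))
    (hfin : μ {θ | ∃ T, 1 ≤ T ∧ IsConstFn (compBwd (fun k => G k θ) T)} = 1) (x x₀ y : Ω) :
    Tendsto (fun T => μ.real {θ | compBwd (fun k => G k θ) T x = y}) atTop
      (𝓝 (μ.real {θ | compBwd (fun k => G k θ) (coalTime G θ) x₀ = y})) := by
  set D : ℕ → Set Θ :=
    fun T => {θ | ∃ S, 1 ≤ S ∧ S ≤ T ∧ IsConstFn (compBwd (fun k => G k θ) S)}
  have hmeas (T : ℕ) : MeasurableSet (D T) :=
    measurableSet_setOfPred.2 <| Measurable.exists fun S => measurable_const.and <|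
      measurable_const.and <| measurableSet_setOfPred.1 (measurable_compBwd hG S
        (.of_discrete (s := {g : Ω → Ω | IsConstFn g})))
  have hmono : Monotone D := fun T T' h θ ⟨S, hS, hST, hc⟩ => ⟨S, hS, hST.trans h, hc⟩
  have hunion : ⋃ T, D T = {θ | ∃ T, 1 ≤ T ∧ IsConstFn (compBwd (fun k => G k θ) T)} := by
    ext θ
    simp only [D, Set.mem_iUnion, Set.mem_ofPred_eq]
    exact ⟨fun ⟨_, S, hS, _, hc⟩ => ⟨S, hS, hc⟩, fun ⟨S, hS, hc⟩ => ⟨S, S, hS, le_rfl, hc⟩⟩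
  rw [tendsto_iff_norm_sub_tendsto_zero]
  refine squeeze_zero (fun _ => norm_nonneg _) (fun T => abs_measureReal_sub_le_of_inter_eq ?_)
    (tendsto_measureReal_compl_atTop hmeas hmono (hunion ▸ hfin))
  ext θ
  simp only [Set.mem_inter_iff, Set.mem_ofPred_eq]
  refine and_congr_left fun ⟨S, hS, hST, hc⟩ => ?_
  rw [compBwd_apply_eq_coalTime G θ hS hST hc x x₀]

end RandomMaps

theorem cftp_correct_general
    {Ω : Type*} [Fintype Ω] [DecidableEq Ω]
    {Θ : Type*} [MeasurableSpace Θ] (μ : Measure Θ) [IsProbabilityMeasure μ]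
    (M : Ω → Ω → ℝ)
    (π : Ω → ℝ) (hπsum : ∑ x, π x = 1)
    (hπstat : ∀ y, ∑ x, π x * M x y = π y)
    (G : ℕ → Θ → Ω → Ω)
    (hmeas : ∀ k, @Measurable Θ (Ω → Ω) _ ⊤ (G k))
    (hindep : iIndepFun (m := fun _ : ℕ => (⊤ : MeasurableSpace (Ω → Ω))) G μ)
    (hrep : ∀ k : ℕ, ∀ x y : Ω, (μ {θ | G k θ x = y}).toReal = M x y)
    (hfin : μ {θ | ∃ T : ℕ, 1 ≤ T ∧ IsConstFn (compBwd (fun k => G k θ) T)} = 1)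
    (x₀ : Ω) :
    ∀ y : Ω,
      (μ {θ | compBwd (fun k => G k θ) (coalTime G θ) x₀ = y}).toReal = π y := by
  let _ : MeasurableSpace (Ω → Ω) := ⊤
  intro y
  refine stationary_apply_eq_of_tendsto_pow_apply (M := M) (funext hπstat) hπsum fun x => ?_
  exact (tendsto_measureReal_compBwd_apply hmeas hfin x x₀ y).congr fun T =>
    measureReal_compBwd_apply_eq_pow hmeas hindep hrep T x y

/-- correctness of coupling from the past, Propp–Wilson:
if `M` is a stochastic matrix with stationary distribution `π`, `(g_k)` is an
i.i.d. sequence of random functions with `ℙ(g_1(x) = y) = M[x,y]`, and the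
coalescence time `N` is a.s. finite, then `W = (g_1 ∘ ⋯ ∘ g_N)(x₀)` is an exact
sample from `π`. -/
theorem cftp_correct
    {Ω : Type*} [Fintype Ω] [Nonempty Ω] [DecidableEq Ω]
    {Θ : Type*} [MeasurableSpace Θ] (μ : Measure Θ) [IsProbabilityMeasure μ]
    (M : Ω → Ω → ℝ) (hMnonneg : ∀ x y, 0 ≤ M x y) (hMrow : ∀ x, ∑ y, M x y = 1)
    (π : Ω → ℝ) (hπnonneg : ∀ x, 0 ≤ π x) (hπsum : ∑ x, π x = 1)
    (hπstat : ∀ y, ∑ x, π x * M x y = π y)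
    (G : ℕ → Θ → Ω → Ω)
    (hmeas : ∀ k, @Measurable Θ (Ω → Ω) _ ⊤ (G k))
    (hindep : iIndepFun (m := fun _ : ℕ => (⊤ : MeasurableSpace (Ω → Ω))) G μ)
    (hident : ∀ i j : ℕ, @IdentDistrib Θ Θ (Ω → Ω) _ _ ⊤ (G i) (G j) μ μ)
    (hrep : ∀ k : ℕ, ∀ x y : Ω, (μ {θ | G k θ x = y}).toReal = M x y)
    (hfin : μ {θ | ∃ T : ℕ, 1 ≤ T ∧ IsConstFn (compBwd (fun k => G k θ) T)} = 1)
    (x₀ : Ω) :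
    ∀ y : Ω,
      (μ {θ | compBwd (fun k => G k θ) (coalTime G θ) x₀ = y}).toReal = π y :=
  cftp_correct_general μ M π hπsum hπstat G hmeas hindep hrep hfin x₀
end

section
/- Let Δ ≥ 1 be a natural number and let λ, p, α be real numbers with λ > 0, p > 0, α > 0, Δ·λ ≤ α, and α·(1+p) ≤ 1. Then (1/(1+λ))·(1 − Δ·p·λ/(1+λ)) − Δ·λ/(1+λ) ≥ (1 − α·(1+p))/(1+α). Moreover, if α·(1+p) < 1, the left-hand side is strictly positive. -/
/-! With `t = Δλ ≤ α`, the left-hand side is `(1 - t - t p / (1 + λ)) / (1 + λ)`, and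
`t p / (1 + λ) ≤ t p ≤ α p` bounds it below by `(1 - α (1 + p)) / (1 + λ)`. Since `λ ≤ Δλ ≤ α`
and the numerator is nonnegative, enlarging the denominator to `1 + α` only decreases it. -/

lemma div_one_add_le_hardcore_gap {d lam p α : ℝ} (hd : 0 ≤ d) (hlam : 0 ≤ lam) (hp : 0 ≤ p)
    (hfug : d * lam ≤ α) :
    (1 - α * (1 + p)) / (1 + lam) ≤
      1 / (1 + lam) * (1 - d * p * lam / (1 + lam)) - d * lam / (1 + lam) := by
  have hpos : 0 < 1 + lam := by linarith
  have hdpl : d * p * lam / (1 + lam) ≤ α * p := calc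
    d * p * lam / (1 + lam) ≤ d * p * lam := div_le_self (by positivity) (by linarith)
    _ = d * lam * p := by ring
    _ ≤ α * p := mul_le_mul_of_nonneg_right hfug hp
  have hsplit : 1 / (1 + lam) * (1 - d * p * lam / (1 + lam)) - d * lam / (1 + lam) =
      (1 - d * p * lam / (1 + lam) - d * lam) / (1 + lam) := by ring
  rw [hsplit]
  exact div_le_div_of_nonneg_right (by linarith) hpos.le

theorem hardcore_inequality_general
    (Δ : ℕ) (hΔ : 1 ≤ Δ) (lam p α : ℝ)
    (hlam : 0 < lam) (hp : 0 < p)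
    (hfug : (Δ : ℝ) * lam ≤ α) (hsmall : α * (1 + p) ≤ 1) :
    (1 / (1 + lam)) * (1 - (Δ : ℝ) * p * lam / (1 + lam)) - (Δ : ℝ) * lam / (1 + lam)
      ≥ (1 - α * (1 + p)) / (1 + α) ∧
    (α * (1 + p) < 1 →
      0 < (1 / (1 + lam)) * (1 - (Δ : ℝ) * p * lam / (1 + lam))
            - (Δ : ℝ) * lam / (1 + lam)) := by
  have hlamα : lam ≤ α := (le_mul_of_one_le_left hlam.le (by exact_mod_cast hΔ)).trans hfug
  have key : (1 - α * (1 + p)) / (1 + α) ≤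
      1 / (1 + lam) * (1 - Δ * p * lam / (1 + lam)) - Δ * lam / (1 + lam) :=
    (div_le_div_of_nonneg_left (sub_nonneg.2 hsmall) (by linarith) (by linarith)).trans
      (div_one_add_le_hardcore_gap Δ.cast_nonneg hlam.le hp.le hfug)
  exact ⟨key, fun hlt => (div_pos (sub_pos.2 hlt) (by linarith)).trans_le key⟩

/-- the inequality at the core of the hardcore-model theorem:
for Δ ≥ 1, λ, p, α > 0 with Δ·λ ≤ α and α·(1+p) ≤ 1,
(1/(1+λ))·(1 − Δ·p·λ/(1+λ)) − Δ·λ/(1+λ) ≥ (1 − α·(1+p))/(1+α),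
and the left-hand side is strictly positive when α·(1+p) < 1. -/
theorem hardcore_inequality
    (Δ : ℕ) (hΔ : 1 ≤ Δ) (lam p α : ℝ)
    (hlam : 0 < lam) (hp : 0 < p) (hα : 0 < α)
    (hfug : (Δ : ℝ) * lam ≤ α) (hsmall : α * (1 + p) ≤ 1) :
    (1 / (1 + lam)) * (1 - (Δ : ℝ) * p * lam / (1 + lam)) - (Δ : ℝ) * lam / (1 + lam)
      ≥ (1 - α * (1 + p)) / (1 + α) ∧
    (α * (1 + p) < 1 →
      0 < (1 / (1 + lam)) * (1 - (Δ : ℝ) * p * lam / (1 + lam))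
            - (Δ : ℝ) * lam / (1 + lam)) :=
  hardcore_inequality_general Δ hΔ lam p α hlam hp hfug hsmall
end

section
/- Let α, D, p, λ be real numbers with α > 1, D ≥ 1, 0 ≤ p ≤ α − 1, and λ ≥ α·D. Then (λ/(1+λ))·(1 − D·p/(1+λ)) − D/(1+λ) ≥ (α − p − 1)/(1+α). Moreover, if p < α − 1, the left-hand side is strictly positive. -/
/-!
Write `t = λ/(1+λ)`. From `α·D ≤ λ` we get `D/(1+λ) ≤ t/α`, so both subtracted terms are
controlled by `t`, and the left-hand side is at least `t·(1 - (p+1)/α)`. Since `λ ≥ α`, also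
`t ≥ α/(1+α)`, and `α/(1+α)·(1 - (p+1)/α) = (α-p-1)/(1+α)`.
-/

lemma div_one_add_le_div_one_add {a b : ℝ} (ha : 0 ≤ a) (hab : a ≤ b) :
    a / (1 + a) ≤ b / (1 + b) := by
  rw [div_le_div_iff₀ (by linarith) (by linarith)]
  linarith

lemma mul_one_sub_le_of_mul_le {α D p lam : ℝ} (hα : 0 < α) (hD : 0 ≤ D) (hp : 0 ≤ p)
    (hlam : α * D ≤ lam) :
    lam / (1 + lam) * (1 - (p + 1) / α) ≤
      lam / (1 + lam) * (1 - D * p / (1 + lam)) - D / (1 + lam) := by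
  have hlam0 : 0 ≤ lam := (mul_nonneg hα.le hD).trans hlam
  set t := lam / (1 + lam)
  have ht0 : 0 ≤ t := by positivity
  have ht1 : t ≤ 1 := (div_le_one (by linarith)).2 (by linarith)
  have hu : D / (1 + lam) ≤ t / α := by
    rw [le_div_iff₀ hα, div_mul_eq_mul_div, mul_comm D]
    exact div_le_div_of_nonneg_right hlam (by linarith)
  have hup : D * p / (1 + lam) ≤ p / α :=
    calc D * p / (1 + lam) = D / (1 + lam) * p := by ring
      _ ≤ t / α * p := mul_le_mul_of_nonneg_right hu hp
      _ ≤ 1 / α * p := by gcongr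
      _ = p / α := by ring
  calc t * (1 - (p + 1) / α) = t * (1 - p / α) - t / α := by ring
    _ ≤ t * (1 - D * p / (1 + lam)) - D / (1 + lam) := by gcongr

/-- the inequality at the core of the weighted-dominating-set
theorem: for α > 1, D ≥ 1, 0 ≤ p ≤ α − 1 and λ ≥ α·D,
(λ/(1+λ))·(1 − D·p/(1+λ)) − D/(1+λ) ≥ (α − p − 1)/(1+α),
and the left-hand side is strictly positive when p < α − 1. -/
theorem dominating_set_inequality
    (α D p lam : ℝ) (hα : 1 < α) (hD : 1 ≤ D)
    (hp0 : 0 ≤ p) (hp : p ≤ α - 1) (hlam : α * D ≤ lam) :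
    (lam / (1 + lam)) * (1 - D * p / (1 + lam)) - D / (1 + lam)
      ≥ (α - p - 1) / (1 + α) ∧
    (p < α - 1 →
      0 < (lam / (1 + lam)) * (1 - D * p / (1 + lam)) - D / (1 + lam)) := by
  have hα0 : 0 < α := by linarith
  have hαlam : α ≤ lam := le_mul_of_one_le_right hα0.le hD |>.trans hlam
  have hslack : 0 ≤ 1 - (p + 1) / α := by
    rw [sub_nonneg, div_le_one hα0]
    linarith
  have main : (α - p - 1) / (1 + α) ≤
      (lam / (1 + lam)) * (1 - D * p / (1 + lam)) - D / (1 + lam) :=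
    calc (α - p - 1) / (1 + α) = α / (1 + α) * (1 - (p + 1) / α) := by field_simp; ring
      _ ≤ lam / (1 + lam) * (1 - (p + 1) / α) :=
        mul_le_mul_of_nonneg_right (div_one_add_le_div_one_add hα0.le hαlam) hslack
      _ ≤ _ := mul_one_sub_le_of_mul_le hα0 (by linarith) hp0 hlam
  exact ⟨main, fun hlt => (div_pos (by linarith) (by linarith)).trans_le main⟩
end
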